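/- Fix n ≥ 1 and for 1 ≤ i ≤ n let σ_i ∈ S_n be defined by σ_n = 1 and σ_i = s_i s_{i+1} ⋯ s_{n-1} for i < n. Then for every k ≥ 0, the element Σ_{i=1}^{n} σ_i X_n^k σ_i^{-1} of ℂ[S_n] lies in the center of ℂ[S_n], where X_n = Σ_{j=1}^{n-1} (j, n) is the Jucys–Murphy element of ℂ[S_n]. -/

import Mathlib

/-- The adjacent transposition `s_m = (m, m+1)` (with `1 ≤ m ≤ n-1`, elements of
`S_n` being permutations of `{1, …, n}` modelled as `Fin n`, so `m` is 0-indexed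
as `m - 1`); junk value `1` when `m` is out of range. -/
def adjTransposition (n m : ℕ) : Equiv.Perm (Fin n) :=
  if h : 1 ≤ m ∧ m < n then Equiv.swap ⟨m - 1, by omega⟩ ⟨m, h.2⟩ else 1

/-- `σ_i = s_i s_{i+1} ⋯ s_{n-1}` (so in particular `σ_n = 1`). -/
def sigmaRep (n i : ℕ) : Equiv.Perm (Fin n) :=
  ((List.range' i (n - i)).map (adjTransposition n)).prod

/-!
Since `σ_i(n) = i`, the `σ_i` form a system of representatives of the left cosets of the
stabilizer of `n` in `S_n`, and `X_n` commutes with that stabilizer. So `σ X_n^k σ⁻¹` depends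
only on the coset of `σ`, and conjugating the sum by any `g ∈ S_n` merely permutes the cosets.
-/

open Finset MonoidAlgebra

section

variable {k G : Type*} [CommSemiring k]

theorem MonoidAlgebra.mem_center_of_forall_commute_of [Monoid G] {x : MonoidAlgebra k G}
    (h : ∀ g, Commute (of k G g) x) : x ∈ Subalgebra.center k (MonoidAlgebra k G) := by
  rw [Subalgebra.mem_center_iff]
  intro y
  induction y using MonoidAlgebra.induction_on with
  | of g => exact h g
  | add y z hy hz => rw [add_mul, mul_add, hy, hz]
  | smul r y hy => rw [smul_mul_assoc, mul_smul_comm, hy]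

variable {α : Type*} [Group G] [MulAction G α] {a : α} {x : MonoidAlgebra k G}

theorem MonoidAlgebra.of_mul_mul_of_inv_eq_of_smul_eq
    (hx : ∀ π ∈ MulAction.stabilizer G a, Commute (of k G π) x) {τ₁ τ₂ : G}
    (hτ : τ₁ • a = τ₂ • a) :
    of k G τ₁ * x * of k G τ₁⁻¹ = of k G τ₂ * x * of k G τ₂⁻¹ := by
  obtain ⟨π, rfl⟩ : ∃ π, τ₁ = τ₂ * π := ⟨τ₂⁻¹ * τ₁, by group⟩
  have hπ : π ∈ MulAction.stabilizer G a := by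
    rwa [mul_smul, smul_left_cancel_iff] at hτ
  calc of k G (τ₂ * π) * x * of k G (τ₂ * π)⁻¹
      = of k G τ₂ * (of k G π * x * of k G π⁻¹) * of k G τ₂⁻¹ := by
        simp only [mul_inv_rev, map_mul, mul_assoc]
    _ = of k G τ₂ * x * of k G τ₂⁻¹ := by
        rw [(hx π hπ).eq, mul_assoc x, ← map_mul, mul_inv_cancel, map_one, mul_one]

theorem MonoidAlgebra.sum_of_mul_mul_of_inv_mem_center [Fintype α] (τ : α → G)
    (hτ : ∀ b, τ b • a = b)
    (hx : ∀ π ∈ MulAction.stabilizer G a, Commute (of k G π) x) :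
    ∑ b, of k G (τ b) * x * of k G (τ b)⁻¹ ∈ Subalgebra.center k (MonoidAlgebra k G) := by
  refine mem_center_of_forall_commute_of fun g => ?_
  have hmove : ∀ b, of k G g * (of k G (τ b) * x * of k G (τ b)⁻¹)
      = of k G (τ (g • b)) * x * of k G (τ (g • b))⁻¹ * of k G g := fun b =>
    calc of k G g * (of k G (τ b) * x * of k G (τ b)⁻¹)
        = of k G (g * τ b) * x * of k G (g * τ b)⁻¹ * of k G g := by
          simp only [mul_inv_rev, map_mul, mul_assoc]
          rw [← map_mul (of k G) g⁻¹ g, inv_mul_cancel, map_one, mul_one]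
      _ = of k G (τ (g • b)) * x * of k G (τ (g • b))⁻¹ * of k G g := by
          rw [of_mul_mul_of_inv_eq_of_smul_eq hx (τ₂ := τ (g • b))
            (by simp only [mul_smul, hτ])]
  calc of k G g * ∑ b, of k G (τ b) * x * of k G (τ b)⁻¹
      = (∑ b, of k G (τ (g • b)) * x * of k G (τ (g • b))⁻¹) * of k G g := by
        rw [mul_sum, sum_mul]
        exact sum_congr rfl fun b _ => hmove b
    _ = (∑ b, of k G (τ b) * x * of k G (τ b)⁻¹) * of k G g := by
        congr 1
        exact Equiv.sum_comp (MulAction.toPerm g) fun b => of k G (τ b) * x * of k G (τ b)⁻¹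

end

theorem MonoidAlgebra.commute_of_sum_of_swap {k α : Type*} [CommSemiring k] [Fintype α]
    [DecidableEq α] {a : α} {π : Equiv.Perm α} (hπ : π a = a) :
    Commute (of k _ π) (∑ b, of k _ (Equiv.swap b a)) := by
  rw [Commute, SemiconjBy, mul_sum, sum_mul]
  simp_rw [← map_mul, Equiv.mul_swap_eq_swap_mul, hπ]
  exact Equiv.sum_comp π fun c => of k _ (Equiv.swap c a * π)

theorem commute_of_sum_swap_castSucc_last {k : Type*} [CommRing k] {m : ℕ}
    {π : Equiv.Perm (Fin (m + 1))} (hπ : π (Fin.last m) = Fin.last m) :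
    Commute (of k _ π) (∑ j : Fin m, of k _ (Equiv.swap j.castSucc (Fin.last m))) := by
  have h := commute_of_sum_of_swap (k := k) hπ
  rw [Fin.sum_univ_castSucc, Equiv.swap_self, ← Equiv.Perm.one_def, map_one] at h
  simpa using h.sub_right (Commute.one_right _)

theorem Finset.sum_Icc_one_eq_sum_fin {M : Type*} [AddCommMonoid M] (n : ℕ) (f : ℕ → M) :
    ∑ i ∈ Icc 1 n, f i = ∑ b : Fin n, f (b + 1) := by
  rw [Fin.sum_univ_eq_sum_range (fun i => f (i + 1)), range_eq_Ico, sum_Ico_add']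
  rfl

theorem sigmaRep_self (n : ℕ) : sigmaRep n n = 1 := by
  simp [sigmaRep]

theorem sigmaRep_eq_mul {n i : ℕ} (hi : i < n) :
    sigmaRep n i = adjTransposition n i * sigmaRep n (i + 1) := by
  rw [sigmaRep, sigmaRep, show n - i = n - (i + 1) + 1 by omega, List.range'_succ]
  rfl

theorem adjTransposition_apply_right {n i : ℕ} (hi : 1 ≤ i) (hin : i < n) :
    adjTransposition n i ⟨i, hin⟩ = ⟨i - 1, by omega⟩ := by
  rw [adjTransposition, dif_pos ⟨hi, hin⟩, Equiv.swap_apply_right]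

theorem sigmaRep_succ_apply_last {m b : ℕ} (hb : b < m + 1) :
    sigmaRep (m + 1) (b + 1) (Fin.last m) = ⟨b, hb⟩ := by
  induction hd : m - b generalizing b with
  | zero =>
    obtain rfl : m = b := by omega
    rw [sigmaRep_self, Equiv.Perm.one_apply, Fin.last]
  | succ d ih =>
    rw [sigmaRep_eq_mul (by omega), Equiv.Perm.mul_apply, ih (by omega) (by omega)]
    exact adjTransposition_apply_right (by omega) _

/-- For `n ≥ 1` and every `k ≥ 0`, the element `Σ_{i=1}^{n} σ_i X_n^k σ_i⁻¹` of
`ℂ[S_n]` lies in the center of `ℂ[S_n]`, where `σ_n = 1`, `σ_i = s_i s_{i+1} ⋯ s_{n-1}`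
for `i < n`, and `X_n = Σ_{j=1}^{n-1} (j, n)` is the Jucys–Murphy element. -/
theorem sum_conj_jucysMurphy_pow_mem_center (n k : ℕ) (hn : 1 ≤ n) :
    (∑ i ∈ Finset.Icc 1 n,
        MonoidAlgebra.of ℂ (Equiv.Perm (Fin n)) (sigmaRep n i)
          * (∑ j : Fin (n - 1), MonoidAlgebra.of ℂ (Equiv.Perm (Fin n))
              (Equiv.swap (Fin.castLE (Nat.sub_le n 1) j) ⟨n - 1, by omega⟩)) ^ k
          * MonoidAlgebra.of ℂ (Equiv.Perm (Fin n)) (sigmaRep n i)⁻¹)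
      ∈ Subalgebra.center ℂ (MonoidAlgebra ℂ (Equiv.Perm (Fin n))) := by
  obtain ⟨m, rfl⟩ : ∃ m, n = m + 1 := ⟨n - 1, by omega⟩
  rw [sum_Icc_one_eq_sum_fin]
  -- `m + 1 - 1` reduces to `m`, so `X_n` is the `castSucc` sum of the lemma up to defeq.
  exact sum_of_mul_mul_of_inv_mem_center (a := Fin.last m) _
    (fun b => sigmaRep_succ_apply_last b.2) fun π hπ =>
      (commute_of_sum_swap_castSucc_last (MulAction.mem_stabilizer_iff.mp hπ)).pow_right k
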